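/- arXiv:2310.08695 — 2 statements merged into one kernel-verified Lean document; each statement's English description precedes it below -/
import Mathlib

section
/- For every integer l ≥ 2 and every x = (x_1,…,x_l) ∈ ℝ^l, the series defining the continuous multinomial coefficient {x} converges absolutely; in particular the continuous multinomial is a finite real-valued function on ℝ^l. -/
/-- A word `w : Fin n → Fin l` is a Smirnov word if no two consecutive letters
are equal. -/
def IsSmirnov {l n : ℕ} (w : Fin n → Fin l) : Prop :=
  ∀ i : Fin n, ∀ h : (i : ℕ) + 1 < n, w i ≠ w ⟨(i : ℕ) + 1, h⟩

/-- `kcount w j` is the number of occurrences of the letter `j` in the word `w`. -/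
noncomputable def kcount {l n : ℕ} (w : Fin n → Fin l) (j : Fin l) : ℕ :=
  Nat.card {i : Fin n // w i = j}

/-- The summand of the continuous multinomial series attached to a word `w`:
`Π_{j=1}^l x_j^{k_j(w)−1}/(k_j(w)−1)!`. -/
noncomputable def contMultinomialTerm {l n : ℕ} (x : Fin l → ℝ) (w : Fin n → Fin l) : ℝ :=
  ∏ j : Fin l, x j ^ (kcount w j - 1) / (Nat.factorial (kcount w j - 1) : ℝ)

/-!
The Smirnov condition only removes terms, so it can be ignored. A surjective word of length
`m + l` has `∑ⱼ (kⱼ - 1) = m`, hence some letter has `kⱼ - 1 ≥ m / l` and its term is at most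
`‖x‖ ^ m / (m / l)!`. There are at most `l ^ (m + l)` such words, and `∑ₘ (l‖x‖) ^ m / (m / l)!`
converges: writing `m = q l + r`, it splits into `l` exponential series in `q`.
-/

open Finset
open scoped Nat

lemma Nat.factorial_sum_div_card_le_prod_factorial {ι : Type*} [Fintype ι] (a : ι → ℕ) :
    ((∑ i, a i) / Fintype.card ι)! ≤ ∏ i, (a i)! := by
  cases isEmpty_or_nonempty ι
  · simp
  obtain ⟨i, -, hi⟩ : ∃ i ∈ univ, (∑ i, a i) / Fintype.card ι ≤ a i := by
    refine exists_le_of_sum_le univ_nonempty ?_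
    rw [sum_const, Finset.card_univ, smul_eq_mul, mul_comm]
    exact Nat.div_mul_le_self _ _
  exact (Nat.factorial_le hi).trans
    (single_le_prod' (fun j _ => Nat.one_le_iff_ne_zero.mpr (Nat.factorial_ne_zero _))
      (mem_univ i))

lemma summable_pow_div_factorial_div (l : ℕ) [NeZero l] {D : ℝ} (hD : 0 ≤ D) :
    Summable fun n : ℕ => D ^ n / (n / l)! := by
  rw [← (Nat.divModEquiv l).symm.summable_iff]
  have hq : Summable fun q : ℕ => (D ^ l) ^ q / q ! := Real.summable_pow_div_factorial _
  convert hq.mul_of_nonneg (Summable.of_finite (f := fun r : Fin l => D ^ (r : ℕ)))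
    (fun q => by positivity) (fun r => by positivity) using 2 with ⟨q, r⟩
  have hdiv : (q * l + r) / l = q := by
    rw [add_comm, Nat.add_mul_div_right _ _ (NeZero.pos l), Nat.div_eq_of_lt r.isLt, zero_add]
  simp only [Function.comp_apply, Nat.divModEquiv_symm_apply, hdiv, pow_add, ← pow_mul, mul_comm l]
  ring

lemma kcount_eq_card_filter {l n : ℕ} (w : Fin n → Fin l) (j : Fin l) :
    kcount w j = #{i | w i = j} := by
  rw [kcount, Nat.card_eq_fintype_card, Fintype.card_subtype]

lemma sum_kcount {l n : ℕ} (w : Fin n → Fin l) : ∑ j, kcount w j = n := by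
  simp_rw [kcount_eq_card_filter]
  rw [← card_eq_sum_card_fiberwise fun i _ => mem_univ (w i), card_univ, Fintype.card_fin]

lemma one_le_kcount {l n : ℕ} {w : Fin n → Fin l} (hw : Function.Surjective w) (j : Fin l) :
    1 ≤ kcount w j := by
  obtain ⟨i, hi⟩ := hw j
  exact Nat.one_le_iff_ne_zero.mpr (Nat.card_ne_zero.mpr ⟨⟨⟨i, hi⟩⟩, inferInstance⟩)

lemma sum_kcount_sub_one {l m : ℕ} {w : Fin (m + l) → Fin l} (hw : Function.Surjective w) :
    ∑ j, (kcount w j - 1) = m := by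
  rw [sum_tsub_distrib _ fun j _ => one_le_kcount hw j, sum_kcount, sum_const, Finset.card_univ,
    Fintype.card_fin, smul_eq_mul, mul_one, Nat.add_sub_cancel]

lemma abs_contMultinomialTerm_le {l m : ℕ} (x : Fin l → ℝ) {w : Fin (m + l) → Fin l}
    (hw : Function.Surjective w) :
    |contMultinomialTerm x w| ≤ ‖x‖ ^ m / (m / l)! := by
  set a : Fin l → ℕ := fun j => kcount w j - 1
  have hnum : ∏ j, |x j| ^ a j ≤ ‖x‖ ^ m := by
    rw [← sum_kcount_sub_one hw, ← prod_pow_eq_pow_sum]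
    exact prod_le_prod (fun j _ => by positivity)
      (fun j _ => pow_le_pow_left₀ (abs_nonneg _) (norm_le_pi_norm x j) _)
  have hden : ((m / l)! : ℝ) ≤ ∏ j, ((a j)! : ℝ) := by
    have := Nat.factorial_sum_div_card_le_prod_factorial a
    rw [sum_kcount_sub_one hw, Fintype.card_fin] at this
    exact_mod_cast this
  rw [contMultinomialTerm, abs_prod]
  simp_rw [abs_div, abs_pow, Nat.abs_cast]
  rw [prod_div_distrib]
  exact div_le_div₀ (by positivity) hnum (by positivity) hden

lemma tsum_abs_contMultinomialTerm_le {l : ℕ} (x : Fin l → ℝ) (m : ℕ) :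
    ∑' w : {w : Fin (m + l) → Fin l // IsSmirnov w ∧ Function.Surjective w},
        |contMultinomialTerm x w.1| ≤ l ^ l * ((l * ‖x‖) ^ m / (m / l)!) :=
  calc _ ≤ ∑' w : {w : Fin (m + l) → Fin l // IsSmirnov w ∧ Function.Surjective w},
          ‖x‖ ^ m / (m / l)! :=
        Summable.of_finite.tsum_le_tsum (fun w => abs_contMultinomialTerm_le x w.2.2)
          Summable.of_finite
    _ ≤ l ^ (m + l) * (‖x‖ ^ m / (m / l)!) := by
        rw [tsum_const, nsmul_eq_mul]
        gcongr
        exact_mod_cast (Finite.card_subtype_le _).trans_eq (by simp)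
    _ = l ^ l * ((l * ‖x‖) ^ m / (m / l)!) := by ring

/-- For every `l ≥ 2` and `x ∈ ℝ^l`, the series
`{x} = Σ_{n≥l} Σ_w Π_j x_j^{k_j(w)−1}/(k_j(w)−1)!` defining the continuous
multinomial coefficient, with `w` ranging over Smirnov words of length `n`
over `{1,…,l}` in which every letter occurs, converges absolutely; in
particular the continuous multinomial is a finite real-valued function on `ℝ^l`. -/
theorem contMultinomial_summable (l : ℕ) (hl : 2 ≤ l) (x : Fin l → ℝ) :
    Summable (fun p : Σ n : ℕ, {w : Fin n → Fin l // IsSmirnov w ∧ Function.Surjective w} =>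
      |contMultinomialTerm x p.2.1|) := by
  have : NeZero l := ⟨by omega⟩
  rw [summable_sigma_of_nonneg fun _ => abs_nonneg _]
  refine ⟨fun n => Summable.of_finite, ?_⟩
  rw [← summable_nat_add_iff l]
  exact ((summable_pow_div_factorial_div l (by positivity)).mul_left _).of_nonneg_of_le
    (fun m => tsum_nonneg fun _ => abs_nonneg _) (tsum_abs_contMultinomialTerm_le x)
end

section
/- Let a group G act on a set V, and let E ⊆ V × V be a G-invariant relation (E(v,w) implies E(g·v, g·w) for all g ∈ G) satisfying the local injectivity condition: for all v, w ∈ V and g ∈ G, if E(v,w) and E(v, g·w) then g·w = w. Define the induced relation Ē on the orbit space V/G by Ē(⟦v⟧,⟦w⟧) iff there exist v' ∈ G·v and w' ∈ G·w with E(v',w'). Fix x, y ∈ V and k ∈ ℕ. Then the quotient projection induces a bijection from the set of E-paths of length k in V starting at x and ending at a point of the orbit G·y (i.e. sequences x = v_0, v_1, …, v_k with E(v_i, v_{i+1}) for all i and v_k ∈ G·y) onto the set of Ē-paths of length k in V/G from ⟦x⟧ to ⟦y⟧. In particular, the set of Ē-paths in V/G from ⟦x⟧ to ⟦y⟧ is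 in bijection with the disjoint union, over y' ∈ G·y, of the sets of E-paths in V from x to y'. -/
/-!
A path in `V ⧸ G` is lifted one edge at a time: by `G`-invariance of `E`, an edge of the induced
relation out of `⟦v⟧` translates to an edge of `E` out of `v`, and by local injectivity that edge
is determined by the orbit of its target. So each path downstairs has exactly one lift with a
given starting point, and its endpoint lies in the orbit of the endpoint downstairs.
-/

def IsPath {α : Type*} (r : α → α → Prop) {k : ℕ} (v : Fin (k + 1) → α) : Prop :=
  ∀ i : Fin k, r (v i.castSucc) (v i.succ)

section

variable {α β : Type*} {r : α → α → Prop} {s : β → β → Prop} {k : ℕ}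

theorem isPath_cons {a : α} {v : Fin (k + 1) → α} :
    IsPath r (Fin.cons a v : Fin (k + 2) → α) ↔ r a (v 0) ∧ IsPath r v := by
  simp [IsPath, Fin.forall_fin_succ]

theorem IsPath.comp {f : α → β} (hf : ∀ a b, r a b → s (f a) (f b)) {v : Fin (k + 1) → α}
    (hv : IsPath r v) : IsPath s (f ∘ v) :=
  fun i ↦ hf _ _ (hv i)

theorem IsPath.eq_of_comp_eq {f : α → β} (hf : ∀ a b b', r a b → r a b' → f b = f b' → b = b')
    {v w : Fin (k + 1) → α} (hv : IsPath r v) (hw : IsPath r w) (h0 : v 0 = w 0)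
    (hvw : f ∘ v = f ∘ w) : v = w := by
  funext i
  induction i using Fin.induction with
  | zero => exact h0
  | succ i ih => exact hf _ _ _ (hv i) (ih ▸ hw i) (congrFun hvw i.succ)

theorem IsPath.exists_lift {f : α → β} (hf : ∀ a c, s (f a) c → ∃ b, r a b ∧ f b = c)
    {u : Fin (k + 1) → β} (hu : IsPath s u) {a : α} (ha : f a = u 0) :
    ∃ v : Fin (k + 1) → α, v 0 = a ∧ IsPath r v ∧ f ∘ v = u := by
  induction k generalizing a with
  | zero =>
    refine ⟨fun _ ↦ a, rfl, fun i ↦ i.elim0, funext fun i ↦ ?_⟩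
    rw [Fin.fin_one_eq_zero i]
    exact ha
  | succ k ih =>
    rw [← Fin.cons_self_tail u, isPath_cons] at hu
    obtain ⟨b, hab, hb⟩ := hf a _ (ha ▸ hu.1)
    obtain ⟨v, hv0, hv, hvu⟩ := ih hu.2 hb
    refine ⟨Fin.cons a v, rfl, isPath_cons.2 ⟨hv0 ▸ hab, hv⟩, ?_⟩
    rw [Fin.comp_cons, hvu, ha, Fin.cons_self_tail]

variable {V Q : Type*} {E : V → V → Prop} {r : Q → Q → Prop} {p : V → Q}

theorem bijOn_comp_isPath (hr : ∀ v w, E v w → r (p v) (p w))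
    (hlift : ∀ v q, r (p v) q → ∃ w, E v w ∧ p w = q)
    (huniq : ∀ v w w', E v w → E v w' → p w = p w' → w = w') (x : V) (q : Q) (k : ℕ) :
    Set.BijOn (fun v ↦ p ∘ v)
      {v : Fin (k + 1) → V | v 0 = x ∧ IsPath E v ∧ p (v (Fin.last k)) = q}
      {u | u 0 = p x ∧ IsPath r u ∧ u (Fin.last k) = q} := by
  refine ⟨?_, ?_, ?_⟩
  · rintro v ⟨hv0, hv, hvq⟩
    exact ⟨congrArg p hv0, hv.comp hr, hvq⟩
  · rintro v ⟨hv0, hv, -⟩ w ⟨hw0, hw, -⟩ hvw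
    exact hv.eq_of_comp_eq huniq hw (hv0.trans hw0.symm) hvw
  · rintro u ⟨hu0, hu, huq⟩
    obtain ⟨v, hv0, hv, hvu⟩ := hu.exists_lift hlift hu0.symm
    exact ⟨v, ⟨hv0, hv, (congrFun hvu _).trans huq⟩, hvu⟩

end

namespace MulAction

variable {G V : Type*} [Group G] [MulAction G V] {E : V → V → Prop}

variable (G E) in
def quotientRel (a b : Quotient (orbitRel G V)) : Prop :=
  ∃ v w, a = Quotient.mk (orbitRel G V) v ∧ b = Quotient.mk (orbitRel G V) w ∧ E v w

theorem mk_eq_mk_iff_mem_orbit {v w : V} :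
    Quotient.mk (orbitRel G V) v = Quotient.mk (orbitRel G V) w ↔ v ∈ orbit G w :=
  Quotient.eq.trans orbitRel_apply

theorem exists_rel_mk_eq_of_quotientRel (hinv : ∀ (g : G) (v w : V), E v w → E (g • v) (g • w))
    (v : V) (q : Quotient (orbitRel G V)) (h : quotientRel G E (Quotient.mk (orbitRel G V) v) q) :
    ∃ w, E v w ∧ Quotient.mk (orbitRel G V) w = q := by
  obtain ⟨v', w', hv, rfl, hE⟩ := h
  obtain ⟨g, rfl⟩ := mk_eq_mk_iff_mem_orbit.1 hv
  exact ⟨g • w', hinv g v' w' hE, mk_eq_mk_iff_mem_orbit.2 (mem_orbit w' g)⟩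

theorem eq_of_rel_of_mk_eq (hloc : ∀ (v w : V) (g : G), E v w → E v (g • w) → g • w = w)
    {v w w' : V} (hw : E v w) (hw' : E v w')
    (h : Quotient.mk (orbitRel G V) w = Quotient.mk (orbitRel G V) w') : w = w' := by
  obtain ⟨g, rfl⟩ := mk_eq_mk_iff_mem_orbit.1 h.symm
  exact (hloc v w g hw hw').symm

end MulAction

/-- Unique path lifting through a quotient by a group action: if a group `G`
acts on `V`, `E` is a `G`-invariant relation on `V` satisfying the local
injectivity condition (`E v w` and `E v (g•w)` imply `g•w = w`), and `Ē` is the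
induced relation on the orbit space `V/G`, then for all `x, y ∈ V` and `k ∈ ℕ`
the quotient projection is a bijection from the set of `E`-paths of length `k`
in `V` starting at `x` and ending in the orbit `G·y` onto the set of `Ē`-paths
of length `k` in `V/G` from `⟦x⟧` to `⟦y⟧`. -/
theorem quotient_path_lifting_bijection {G V : Type*} [Group G] [MulAction G V]
    (E : V → V → Prop)
    (hinv : ∀ (g : G) (v w : V), E v w → E (g • v) (g • w))
    (hloc : ∀ (v w : V) (g : G), E v w → E v (g • w) → g • w = w)
    (x y : V) (k : ℕ) :
    Set.BijOn
      (fun (v : Fin (k + 1) → V) (i : Fin (k + 1)) =>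
        Quotient.mk (MulAction.orbitRel G V) (v i))
      {v : Fin (k + 1) → V | v 0 = x ∧
        (∀ i : Fin k, E (v i.castSucc) (v i.succ)) ∧
        v (Fin.last k) ∈ MulAction.orbit G y}
      {u : Fin (k + 1) → Quotient (MulAction.orbitRel G V) |
        u 0 = Quotient.mk (MulAction.orbitRel G V) x ∧
        (∀ i : Fin k, ∃ v' w' : V,
          u i.castSucc = Quotient.mk (MulAction.orbitRel G V) v' ∧
          u i.succ = Quotient.mk (MulAction.orbitRel G V) w' ∧ E v' w') ∧
        u (Fin.last k) = Quotient.mk (MulAction.orbitRel G V) y} := by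
  have h := bijOn_comp_isPath (r := MulAction.quotientRel G E)
    (fun v w hE ↦ ⟨v, w, rfl, rfl, hE⟩) (MulAction.exists_rel_mk_eq_of_quotientRel hinv)
    (fun _ _ _ ↦ MulAction.eq_of_rel_of_mk_eq hloc) x (Quotient.mk (MulAction.orbitRel G V) y) k
  simp only [MulAction.mk_eq_mk_iff_mem_orbit] at h
  exact h
end
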